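/- Let n > -1 and ν > -(n+1)/2. Then the expression (2(ν+n+1)/(n+1)) x^{-ν} L_{ν+n+1}(x) − ((2ν+n+1)/(n+1)) x^{-ν} L_{ν+n+3}(x) + b_{ν,n} x^{n+4} − c_{ν,n} x^{n+2} is asymptotically equivalent to x^{n+2} / (√π · 2^{ν+n} · (n+2) · Γ(ν + n + 3/2)) as x ↓ 0; that is, the ratio of the two quantities tends to 1 as x tends to 0 from the right. In particular, the upper bound for ∫₀ˣ t^{-ν} L_{ν+n}(t) dt given by this expression is tight as x ↓ 0. -/

import Mathlib

/-- The modified Struve function of the first kind. -/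
noncomputable def modStruveL (ν x : ℝ) : ℝ :=
  ∑' k : ℕ, (x / 2) ^ (ν + 2 * (k : ℝ) + 1) /
    (Real.Gamma ((k : ℝ) + 3 / 2) * Real.Gamma ((k : ℝ) + ν + 3 / 2))

/-- The constant `b_{ν,n}`. -/
noncomputable def bConst (ν n : ℝ) : ℝ :=
  ((2 * ν + n + 1) * (2 * ν + n + 3)) /
    (Real.sqrt Real.pi * (2 : ℝ) ^ (ν + n + 4) * (n + 1) * (n + 4) * (ν + n + 3) *
      Real.Gamma (ν + n + 9 / 2))

/-- The constant `c_{ν,n}`. -/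
noncomputable def cConst (ν n : ℝ) : ℝ :=
  (2 * ν + n + 1) /
    (Real.sqrt Real.pi * (2 : ℝ) ^ (ν + n + 1) * (n + 1) * (n + 2) *
      Real.Gamma (ν + n + 5 / 2))

/-!
Write `L_μ(x) = (x/2)^(μ+1) S_μ((x/2)²)` with `S_μ(y) = ∑ y^k / (Γ(k+3/2) Γ(k+μ+3/2))`. For
`μ ≥ -1/2` the coefficients are at most a constant times `1/k!` (as `Γ(t) k! ≤ Γ(t+k)` for `t ≥ 1`),
so `S_μ` is continuous at `0` with value `1/(Γ(3/2) Γ(μ+3/2))`. After division by `x^(n+2)` the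
terms coming from `L_{ν+n+3}` and `b_{ν,n}` carry a factor `x²` and vanish as `x → 0`; the leading
term of `L_{ν+n+1}` minus `c_{ν,n}` is, by `Γ(3/2) = √π/2` and `Γ(s+1) = s Γ(s)`, exactly the
reciprocal of the normalising constant.
-/

open Real Filter Set Topology
open scoped Nat

theorem Real.Gamma_mul_factorial_le_Gamma_add_nat {t : ℝ} (ht : 1 ≤ t) (k : ℕ) :
    Gamma t * k ! ≤ Gamma (t + k) := by
  induction k with
  | zero => simp
  | succ k ih =>
    have htk : 0 < t + k := by positivity
    calc Gamma t * (k + 1)! = (k + 1) * (Gamma t * k !) := by push_cast [Nat.factorial_succ]; ring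
      _ ≤ (t + k) * Gamma (t + k) := by
        gcongr ?_ * ?_
        linarith
      _ = Gamma (t + (k + 1 : ℕ)) := by
        rw [Nat.cast_succ, ← add_assoc, Gamma_add_one htk.ne']

noncomputable def struveCoeff (μ : ℝ) (k : ℕ) : ℝ :=
  (Gamma (k + 3 / 2) * Gamma (k + μ + 3 / 2))⁻¹

noncomputable def struveSeries (μ y : ℝ) : ℝ :=
  ∑' k : ℕ, struveCoeff μ k * y ^ k

lemma struveCoeff_pos {μ : ℝ} (hμ : -(3 / 2) < μ) (k : ℕ) : 0 < struveCoeff μ k := by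
  have h₁ := Gamma_pos_of_pos (show 0 < (k : ℝ) + 3 / 2 by positivity)
  have h₂ := Gamma_pos_of_pos (show 0 < (k : ℝ) + μ + 3 / 2 by linarith [k.cast_nonneg (α := ℝ)])
  exact inv_pos.2 (mul_pos h₁ h₂)

lemma struveCoeff_le {μ : ℝ} (hμ : -(1 / 2) ≤ μ) (k : ℕ) :
    struveCoeff μ k ≤ (Gamma (3 / 2) * Gamma (μ + 3 / 2) * k !)⁻¹ := by
  have hΓ₁ := Gamma_pos_of_pos (show (0 : ℝ) < 3 / 2 by norm_num)
  have hΓ₂ := Gamma_pos_of_pos (show 0 < μ + 3 / 2 by linarith)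
  have hk : (1 : ℝ) ≤ k ! := mod_cast k.factorial_pos
  have h₁ : Gamma (3 / 2) * k ! ≤ Gamma (k + 3 / 2) := by
    simpa [add_comm] using Gamma_mul_factorial_le_Gamma_add_nat (t := 3 / 2) (by norm_num) k
  have h₂ : Gamma (μ + 3 / 2) ≤ Gamma (k + μ + 3 / 2) :=
    calc Gamma (μ + 3 / 2) ≤ Gamma (μ + 3 / 2) * k ! := le_mul_of_one_le_right hΓ₂.le hk
      _ ≤ Gamma (μ + 3 / 2 + k) := Gamma_mul_factorial_le_Gamma_add_nat (by linarith) k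
      _ = Gamma (k + μ + 3 / 2) := by ring_nf
  refine inv_anti₀ (by positivity) ?_
  calc Gamma (3 / 2) * Gamma (μ + 3 / 2) * k ! = Gamma (3 / 2) * k ! * Gamma (μ + 3 / 2) := by ring
    _ ≤ Gamma (k + 3 / 2) * Gamma (k + μ + 3 / 2) := by gcongr

lemma struveCoeff_zero (μ : ℝ) : struveCoeff μ 0 = (Gamma (3 / 2) * Gamma (μ + 3 / 2))⁻¹ := by
  simp [struveCoeff]

lemma summable_struveCoeff {μ : ℝ} (hμ : -(1 / 2) ≤ μ) : Summable (struveCoeff μ) := by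
  refine Summable.of_nonneg_of_le (fun k => (struveCoeff_pos (by linarith) k).le)
    (struveCoeff_le hμ) ?_
  simpa [mul_inv] using
    (Real.summable_pow_div_factorial 1).mul_right (Gamma (3 / 2) * Gamma (μ + 3 / 2))⁻¹

lemma continuousAt_struveSeries_zero {μ : ℝ} (hμ : -(1 / 2) ≤ μ) :
    ContinuousAt (struveSeries μ) 0 := by
  refine (continuousOn_tsum (f := fun k (y : ℝ) => struveCoeff μ k * y ^ k) (s := Icc (-1) 1)
    (fun k => by fun_prop) (summable_struveCoeff hμ) ?_).continuousAt
    (Icc_mem_nhds (by norm_num) (by norm_num))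
  intro k y hy
  have hc := (struveCoeff_pos (μ := μ) (by linarith) k).le
  rw [norm_mul, norm_pow, Real.norm_of_nonneg hc]
  exact mul_le_of_le_one_right hc (pow_le_one₀ (norm_nonneg y) (abs_le.2 hy))

lemma struveSeries_zero (μ : ℝ) : struveSeries μ 0 = struveCoeff μ 0 := by
  rw [struveSeries, tsum_eq_single 0 (fun k hk => by simp [hk])]
  simp

lemma tendsto_struveSeries_half_sq {μ : ℝ} (hμ : -(1 / 2) ≤ μ) :
    Tendsto (fun x => struveSeries μ ((x / 2) ^ 2)) (𝓝 0) (𝓝 (struveCoeff μ 0)) := by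
  have h := ((continuousAt_struveSeries_zero hμ).comp_of_eq
    (f := fun x : ℝ => (x / 2) ^ 2) (x := 0) (by fun_prop) (by norm_num)).tendsto
  rwa [Function.comp_apply, zero_div, zero_pow two_ne_zero, struveSeries_zero] at h

lemma modStruveL_eq_rpow_mul_struveSeries {x : ℝ} (hx : 0 < x) (μ : ℝ) :
    modStruveL μ x = (x / 2) ^ (μ + 1) * struveSeries μ ((x / 2) ^ 2) := by
  rw [modStruveL, struveSeries, ← tsum_mul_left]
  congr 1 with k
  rw [show μ + 2 * (k : ℝ) + 1 = μ + 1 + (2 * k : ℕ) by push_cast; ring,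
    rpow_add (by positivity), rpow_natCast, pow_mul, struveCoeff, div_eq_mul_inv]
  ring

lemma rpow_neg_mul_modStruveL {x : ℝ} (hx : 0 < x) (ν μ : ℝ) :
    x ^ (-ν) * modStruveL μ x =
      2 ^ (-(μ + 1)) * x ^ (μ - ν + 1) * struveSeries μ ((x / 2) ^ 2) := by
  rw [modStruveL_eq_rpow_mul_struveSeries hx, div_rpow hx.le zero_le_two, rpow_neg zero_le_two,
    show μ - ν + 1 = -ν + (μ + 1) by ring, rpow_add hx (-ν) (μ + 1)]
  ring

lemma struve_leading_constant_eq_one {ν n : ℝ} (hn : -1 < n) (hs : 0 < ν + n + 3 / 2) :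
    √π * 2 ^ (ν + n) * (n + 2) * Gamma (ν + n + 3 / 2) *
      (2 * (ν + n + 1) / (n + 1) * 2 ^ (-(ν + n + 1 + 1)) * struveCoeff (ν + n + 1) 0 -
        cConst ν n) = 1 := by
  have hΓ : Gamma (3 / 2) = √π / 2 := by
    rw [show (3 / 2 : ℝ) = 1 / 2 + 1 by norm_num, Gamma_add_one (by norm_num), Gamma_one_half_eq]
    ring
  have hΓs : Gamma (ν + n + 1 + 3 / 2) = (ν + n + 3 / 2) * Gamma (ν + n + 3 / 2) := by
    rw [← Gamma_add_one hs.ne']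
    ring_nf
  have hΓs' : Gamma (ν + n + 5 / 2) = (ν + n + 3 / 2) * Gamma (ν + n + 3 / 2) := by
    rw [← Gamma_add_one hs.ne']
    ring_nf
  have h₁ : (2 : ℝ) ^ (-(ν + n + 1 + 1)) = (2 ^ (ν + n) * 4)⁻¹ := by
    rw [rpow_neg zero_le_two, show ν + n + 1 + 1 = ν + n + 2 by ring, rpow_add two_pos]
    norm_num
  have h₂ : (2 : ℝ) ^ (ν + n + 1) = 2 ^ (ν + n) * 2 := by
    rw [rpow_add two_pos, rpow_one]
  have hs' : (ν + n) * 2 + 3 ≠ 0 := by linarith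
  have hG := (Gamma_pos_of_pos hs).ne'
  have h2 : (0 : ℝ) < 2 ^ (ν + n) := rpow_pos_of_pos two_pos _
  have hn1 : n + 1 ≠ 0 := by linarith
  have hn2 : n + 2 ≠ 0 := by linarith
  rw [struveCoeff_zero, cConst, hΓ, hΓs, hΓs', h₁, h₂]
  generalize Gamma (ν + n + 3 / 2) = G at hG ⊢
  field_simp
  ring

lemma tendsto_struve_combination {ν n : ℝ} (hn : -1 < n) (hs : 0 < ν + n + 3 / 2) :
    Tendsto (fun x : ℝ => √π * 2 ^ (ν + n) * (n + 2) * Gamma (ν + n + 3 / 2) *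
      (2 * (ν + n + 1) / (n + 1) * 2 ^ (-(ν + n + 1 + 1)) * struveSeries (ν + n + 1) ((x / 2) ^ 2) -
        (2 * ν + n + 1) / (n + 1) * 2 ^ (-(ν + n + 3 + 1)) * x ^ 2 *
          struveSeries (ν + n + 3) ((x / 2) ^ 2) +
        bConst ν n * x ^ 2 - cConst ν n)) (𝓝 0) (𝓝 1) := by
  have hx : Tendsto (fun x : ℝ => x ^ 2) (𝓝 0) (𝓝 0) := by
    simpa using (continuous_pow 2).tendsto (0 : ℝ)
  have h₁ := tendsto_struveSeries_half_sq (μ := ν + n + 1) (by linarith)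
  have h₃ := tendsto_struveSeries_half_sq (μ := ν + n + 3) (by linarith)
  convert ((((h₁.const_mul _).sub ((hx.const_mul _).mul h₃)).add (hx.const_mul _)).sub
    tendsto_const_nhds).const_mul _ using 2
  simp only [mul_zero, zero_mul, sub_zero, add_zero, struve_leading_constant_eq_one hn hs]

theorem struve_upper_bound_asymptotic_zero (ν n : ℝ) (hn : n > -1)
    (hν : ν > -((n + 1) / 2)) :
    Filter.Tendsto
      (fun x : ℝ =>
        ((2 * (ν + n + 1) / (n + 1)) * (x ^ (-ν) * modStruveL (ν + n + 1) x) -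
        ((2 * ν + n + 1) / (n + 1)) * (x ^ (-ν) * modStruveL (ν + n + 3) x) +
        bConst ν n * x ^ (n + 4) - cConst ν n * x ^ (n + 2)) /
          (x ^ (n + 2) /
            (Real.sqrt Real.pi * (2 : ℝ) ^ (ν + n) * (n + 2) * Real.Gamma (ν + n + 3 / 2))))
      (nhdsWithin 0 (Set.Ioi 0)) (nhds 1) := by
  have hs : 0 < ν + n + 3 / 2 := by linarith
  refine ((tendsto_struve_combination hn hs).mono_left nhdsWithin_le_nhds).congr' ?_
  filter_upwards [self_mem_nhdsWithin] with x (hx : 0 < x)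
  have hxn : x ^ (n + 2) ≠ 0 := (rpow_pos_of_pos hx _).ne'
  have hx4 : x ^ (n + 4) = x ^ (n + 2) * x ^ 2 := by
    rw [show n + 4 = n + 2 + 2 by ring, rpow_add hx, rpow_two]
  rw [rpow_neg_mul_modStruveL hx, rpow_neg_mul_modStruveL hx, hx4,
    show ν + n + 1 - ν + 1 = n + 2 by ring, show ν + n + 3 - ν + 1 = n + 2 + 2 by ring,
    rpow_add hx (n + 2) 2, rpow_two]
  field_simp
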